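/- arXiv:1510.00181 — 2 statements merged into one kernel-verified Lean document; each statement's English description precedes it below -/
import Mathlib

section
/- (Hojman's theorem.) Let v, u : ℝⁿ → ℝⁿ be C¹ vector fields and H : ℝⁿ → ℝ a C¹ function such that: (a) v(H) := ⟨v, ∇H⟩ = 0 everywhere (H is a first integral of v); (b) there is a scalar function μ : ℝⁿ → ℝ with [v,u](x) = μ(x)·v(x) for all x; (c) H_u(x) := ⟨u(x), ∇H(x)⟩ ≠ 0 for all x. Then the matrix field J = v∧u, J_ij = v_i u_j − v_j u_i, satisfies the Jacobi identity, and the dynamical system ẋ = v(x) is conformally Hamiltonian: for every x, v(x) = H_u(x)⁻¹ · J(x)·∇H(x), i.e. Σ_j J_ij(x) ∂H/∂x_j(x) = H_u(x)·v_i(x) for all i. -/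
/-- The wedge of two vector fields: `(v ∧ u)_ij = v_i u_j − v_j u_i`. -/
noncomputable def wedge {n : ℕ} (v u : (Fin n → ℝ) → (Fin n → ℝ)) (x : Fin n → ℝ) :
    Matrix (Fin n) (Fin n) ℝ :=
  Matrix.of fun i j => v x i * u x j - v x j * u x i

/-- The partial derivative `∂F/∂x_l` of a scalar function on ℝⁿ. -/
noncomputable def partialDeriv {n : ℕ} (F : (Fin n → ℝ) → ℝ) (l : Fin n) (x : Fin n → ℝ) : ℝ :=
  fderiv ℝ F x (Pi.single l 1)

/-- A matrix field `J` on ℝⁿ satisfies the Jacobi identity if for all `i, j, k` and all `x`: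
`Σ_l ( J_lk ∂J_ij/∂x_l + J_li ∂J_jk/∂x_l + J_lj ∂J_ki/∂x_l ) = 0`. -/
def JacobiIdentity {n : ℕ} (J : (Fin n → ℝ) → Matrix (Fin n) (Fin n) ℝ) : Prop :=
  ∀ (i j k : Fin n) (x : Fin n → ℝ),
    ∑ l, (J x l k * partialDeriv (fun y => J y i j) l x
        + J x l i * partialDeriv (fun y => J y j k) l x
        + J x l j * partialDeriv (fun y => J y k i) l x) = 0

/-!
For `J = v ∧ u` the matrix–gradient product is `J ∇F = u(F) · v − v(F) · u`. With `F = H` and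
`v(H) = 0` this is the conformally Hamiltonian form of `v`. Applying the same formula to the
entries `F = J_ij`, the Jacobi sum of `v ∧ u` becomes, up to sign, the `(i, j, k)` component of
the trivector `v ∧ u ∧ [v, u]`, which vanishes as soon as `[v, u]` lies in the span of `v`
and `u`.
-/

open VectorField

variable {n : ℕ}

lemma fderiv_apply_eq_sum_mul_partialDeriv (F : (Fin n → ℝ) → ℝ) (x y : Fin n → ℝ) :
    fderiv ℝ F x y = ∑ l, y l * partialDeriv F l x := by
  conv_lhs => rw [← Finset.univ_sum_single y, map_sum]
  refine Finset.sum_congr rfl fun l _ => ?_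
  rw [partialDeriv, ← smul_eq_mul, ← map_smul, ← Pi.single_smul, smul_eq_mul, mul_one]

section Wedge

variable (v u : (Fin n → ℝ) → (Fin n → ℝ)) (x : Fin n → ℝ)

lemma wedge_apply (i j : Fin n) : wedge v u x i j = v x i * u x j - v x j * u x i := rfl

lemma sum_wedge_row_mul_partialDeriv (F : (Fin n → ℝ) → ℝ) (i : Fin n) :
    ∑ l, wedge v u x i l * partialDeriv F l x
      = v x i * fderiv ℝ F x (u x) - u x i * fderiv ℝ F x (v x) := by
  simp only [fderiv_apply_eq_sum_mul_partialDeriv F x, Finset.mul_sum, ← Finset.sum_sub_distrib,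
    wedge_apply]
  exact Finset.sum_congr rfl fun l _ => by ring

lemma sum_wedge_col_mul_partialDeriv (F : (Fin n → ℝ) → ℝ) (k : Fin n) :
    ∑ l, wedge v u x l k * partialDeriv F l x
      = u x k * fderiv ℝ F x (v x) - v x k * fderiv ℝ F x (u x) := by
  simp only [fderiv_apply_eq_sum_mul_partialDeriv F x, Finset.mul_sum, ← Finset.sum_sub_distrib,
    wedge_apply]
  exact Finset.sum_congr rfl fun l _ => by ring

variable {v u x}

lemma fderiv_wedge_apply (hv : DifferentiableAt ℝ v x) (hu : DifferentiableAt ℝ u x)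
    (i j : Fin n) (w : Fin n → ℝ) :
    fderiv ℝ (fun y => wedge v u y i j) x w
      = fderiv ℝ v x w i * u x j + v x i * fderiv ℝ u x w j
        - (fderiv ℝ v x w j * u x i + v x j * fderiv ℝ u x w i) := by
  have hv' := hasFDerivAt_pi'.mp hv.hasFDerivAt
  have hu' := hasFDerivAt_pi'.mp hu.hasFDerivAt
  simp only [wedge_apply]
  rw [(((hv' i).fun_mul (hu' j)).fun_sub ((hv' j).fun_mul (hu' i))).fderiv]
  simp only [sub_apply, add_apply, smul_apply, ContinuousLinearMap.comp_apply,
    ContinuousLinearMap.proj_apply, smul_eq_mul]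
  ring

lemma jacobi_sum_wedge_eq (hv : DifferentiableAt ℝ v x) (hu : DifferentiableAt ℝ u x)
    (i j k : Fin n) :
    ∑ l, (wedge v u x l k * partialDeriv (fun y => wedge v u y i j) l x
        + wedge v u x l i * partialDeriv (fun y => wedge v u y j k) l x
        + wedge v u x l j * partialDeriv (fun y => wedge v u y k i) l x)
      = (v x k * u x j - v x j * u x k) * lieBracket ℝ v u x i
        + (v x i * u x k - v x k * u x i) * lieBracket ℝ v u x j
        + (v x j * u x i - v x i * u x j) * lieBracket ℝ v u x k := by
  simp only [Finset.sum_add_distrib, sum_wedge_col_mul_partialDeriv, fderiv_wedge_apply hv hu,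
    lieBracket, Pi.sub_apply]
  ring

end Wedge

theorem jacobiIdentity_wedge_of_lieBracket_eq {v u : (Fin n → ℝ) → (Fin n → ℝ)}
    (hv : Differentiable ℝ v) (hu : Differentiable ℝ u) (μ ν : (Fin n → ℝ) → ℝ)
    (hbr : ∀ x, lieBracket ℝ v u x = μ x • v x + ν x • u x) :
    JacobiIdentity (wedge v u) := by
  intro i j k x
  simp only [jacobi_sum_wedge_eq (hv x) (hu x), hbr, Pi.add_apply, Pi.smul_apply, smul_eq_mul]
  ring

theorem hojman_theorem_general {n : ℕ}
    (v u : (Fin n → ℝ) → (Fin n → ℝ)) (H : (Fin n → ℝ) → ℝ)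
    (hv : ContDiff ℝ 1 v) (hu : ContDiff ℝ 1 u)
    (hfirst : ∀ x, fderiv ℝ H x (v x) = 0)
    (μ : (Fin n → ℝ) → ℝ)
    (hbr : ∀ x, VectorField.lieBracket ℝ v u x = μ x • v x) :
    JacobiIdentity (wedge v u) ∧
      ∀ (x : Fin n → ℝ) (i : Fin n),
        ∑ j, wedge v u x i j * partialDeriv H j x = fderiv ℝ H x (u x) * v x i := by
  refine ⟨jacobiIdentity_wedge_of_lieBracket_eq (hv.differentiable one_ne_zero)
    (hu.differentiable one_ne_zero) μ 0 fun x => by simp [hbr], fun x i => ?_⟩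
  rw [sum_wedge_row_mul_partialDeriv, hfirst, mul_zero, sub_zero, mul_comm]

/-- **Hojman's theorem.** If `H` is a first integral of the `C¹` vector field `v`,
`u` is a conformal symmetry field (`[v,u] = μ·v`), and `H_u = u(H) = ⟨u, ∇H⟩` vanishes nowhere,
then `J = v ∧ u` satisfies the Jacobi identity and the system `ẋ = v(x)` is conformally
Hamiltonian: `Σ_j J_ij ∂H/∂x_j = H_u · v_i` everywhere, i.e. `v = H_u⁻¹ · J·∇H`. -/
theorem hojman_theorem {n : ℕ}
    (v u : (Fin n → ℝ) → (Fin n → ℝ)) (H : (Fin n → ℝ) → ℝ)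
    (hv : ContDiff ℝ 1 v) (hu : ContDiff ℝ 1 u) (hH : ContDiff ℝ 1 H)
    (hfirst : ∀ x, fderiv ℝ H x (v x) = 0)
    (μ : (Fin n → ℝ) → ℝ)
    (hbr : ∀ x, VectorField.lieBracket ℝ v u x = μ x • v x)
    (hHu : ∀ x, fderiv ℝ H x (u x) ≠ 0) :
    JacobiIdentity (wedge v u) ∧
      ∀ (x : Fin n → ℝ) (i : Fin n),
        ∑ j, wedge v u x i j * partialDeriv H j x = fderiv ℝ H x (u x) * v x i :=
  hojman_theorem_general v u H hv hu hfirst μ hbr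
end

section
/- For the nonholonomic hinge system v on ℝ⁵, define the skew-symmetric matrix field J whose only nonzero entries above the diagonal are J₁₅ = Ω₂−ω₂, J₂₅ = −(Ω₁−ω₁), J₃₅ = (I₂−I₃)ω₂/I₁, J₄₅ = −(I₁−I₃)ω₁/I₂ (with J₅ᵢ = −Jᵢ₅), rows/columns ordered as (Ω₁,Ω₂,ω₁,ω₂,ω₃). Then J satisfies the Jacobi identity on all of ℝ⁵, and the hinge system is Hamiltonian with Hamiltonian E up to the constant factor I₃+I_s: J(x)·∇E(x) = (I₃+I_s)·v(x) for every x ∈ ℝ⁵. -/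
/-- The nonholonomic hinge system on ℝ⁵, coordinates `x = (Ω₁, Ω₂, ω₁, ω₂, ω₃)`,
with parameters `I₁, I₂, I₃` (tensor of inertia of the inner body) and `Is` (shell):
`Ω̇₁ = ω₃(Ω₂−ω₂)`, `Ω̇₂ = ω₃(ω₁−Ω₁)`, `I₁ω̇₁ = (I₂−I₃)ω₂ω₃`, `I₂ω̇₂ = (I₃−I₁)ω₁ω₃`,
`(Is+I₃)ω̇₃ = Is(Ω₁ω₂−Ω₂ω₁) + (I₁−I₂)ω₁ω₂`. -/
noncomputable def hinge (I₁ I₂ I₃ Is : ℝ) (x : Fin 5 → ℝ) : Fin 5 → ℝ :=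
  ![x 4 * (x 1 - x 3),
    x 4 * (x 2 - x 0),
    (I₂ - I₃) * (x 3 * x 4) / I₁,
    (I₃ - I₁) * (x 2 * x 4) / I₂,
    (Is * (x 0 * x 3 - x 1 * x 2) + (I₁ - I₂) * (x 2 * x 3)) / (Is + I₃)]

/-- The energy of the nonholonomic hinge:
`E = ½ Is (Ω₁² + Ω₂²) + ½ (I₁ω₁² + I₂ω₂² + (I₃+Is)ω₃²)`. -/
noncomputable def hingeE (I₁ I₂ I₃ Is : ℝ) (x : Fin 5 → ℝ) : ℝ :=
  (1 / 2) * Is * ((x 0) ^ 2 + (x 1) ^ 2)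
    + (1 / 2) * (I₁ * (x 2) ^ 2 + I₂ * (x 3) ^ 2 + (I₃ + Is) * (x 4) ^ 2)
/-- The gradient of a scalar function on ℝⁿ, as the vector of partial derivatives. -/
noncomputable def grad {n : ℕ} (F : (Fin n → ℝ) → ℝ) (x : Fin n → ℝ) : Fin n → ℝ :=
  fun j => fderiv ℝ F x (Pi.single j 1)

/-- The Poisson structure `J⁽²⁾` for the nonholonomic hinge, rows/columns ordered as
`(Ω₁, Ω₂, ω₁, ω₂, ω₃)`: the only nonzero entries above the diagonal are
`J₁₅ = Ω₂−ω₂`, `J₂₅ = −(Ω₁−ω₁)`, `J₃₅ = (I₂−I₃)ω₂/I₁`, `J₄₅ = −(I₁−I₃)ω₁/I₂`. -/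
noncomputable def hingeJ (I₁ I₂ I₃ : ℝ) (x : Fin 5 → ℝ) : Matrix (Fin 5) (Fin 5) ℝ :=
  Matrix.of
    ![![0, 0, 0, 0, x 1 - x 3],
      ![0, 0, 0, 0, -(x 0 - x 2)],
      ![0, 0, 0, 0, (I₂ - I₃) * x 3 / I₁],
      ![0, 0, 0, 0, -((I₁ - I₃) * x 2 / I₂)],
      ![-(x 1 - x 3), x 0 - x 2, -((I₂ - I₃) * x 3 / I₁), (I₁ - I₃) * x 2 / I₂, 0]]

/-! `J = a ∧ ∂/∂ω₃`, where `a` (the last column of `J`) is a linear vector field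
not depending on `ω₃`. For a constant vector `c`, the bivector `a ∧ c` is Poisson as soon as the
derivative of `a` along `c` lies in the span of `a` and `c`: the Jacobiator is the triple product
of `a`, `c` and `∂_c a`. The Hamiltonian identity is a direct computation with the diagonal
gradient of the quadratic energy. -/

section

variable {n : ℕ}

lemma sum_mul_apply_single (L : (Fin n → ℝ) →L[ℝ] (Fin n → ℝ)) (w : Fin n → ℝ) (i : Fin n) :
    ∑ l, w l * L (Pi.single l 1) i = L w i := by
  conv_rhs => rw [pi_eq_sum_univ' w]
  simp [map_sum, map_smul]

lemma partialDeriv_wedge_const {v : (Fin n → ℝ) → (Fin n → ℝ)} {x : Fin n → ℝ}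
    (hv : DifferentiableAt ℝ v x) (c : Fin n → ℝ) (i j l : Fin n) :
    partialDeriv (fun y => wedge v (fun _ => c) y i j) l x
      = fderiv ℝ v x (Pi.single l 1) i * c j - fderiv ℝ v x (Pi.single l 1) j * c i := by
  have hv' : ∀ m, HasFDerivAt (fun y => v y m)
      ((ContinuousLinearMap.proj m).comp (fderiv ℝ v x)) x :=
    fun m => hasFDerivAt_pi'.1 hv.hasFDerivAt m
  have h := ((hv' i).mul_const (c j)).fun_sub ((hv' j).mul_const (c i))
  simp only [partialDeriv, wedge, Matrix.of_apply]
  rw [h.fderiv]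
  simp only [sub_apply, smul_apply,
    ContinuousLinearMap.comp_apply, ContinuousLinearMap.proj_apply, smul_eq_mul]
  ring

theorem jacobiIdentity_wedge_const {v : (Fin n → ℝ) → (Fin n → ℝ)} (c : Fin n → ℝ)
    (hv : Differentiable ℝ v) (hvc : ∀ x, fderiv ℝ v x c ∈ Submodule.span ℝ {v x, c}) :
    JacobiIdentity (wedge v fun _ => c) := by
  intro i j k x
  obtain ⟨α, β, hz⟩ := Submodule.mem_span_pair.1 (hvc x)
  simp only [partialDeriv_wedge_const (hv x)]
  simp only [wedge, Matrix.of_apply]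
  set D := fderiv ℝ v x
  set u := v x
  -- the terms with a factor `u l` cancel cyclically, leaving only the derivative along `c`
  have hsummand : ∀ l,
      (u l * c k - u k * c l) * (D (Pi.single l 1) i * c j - D (Pi.single l 1) j * c i)
        + (u l * c i - u i * c l) * (D (Pi.single l 1) j * c k - D (Pi.single l 1) k * c j)
        + (u l * c j - u j * c l) * (D (Pi.single l 1) k * c i - D (Pi.single l 1) i * c k)
      = c l * D (Pi.single l 1) i * (u j * c k - u k * c j)
        + c l * D (Pi.single l 1) j * (u k * c i - u i * c k)
        + c l * D (Pi.single l 1) k * (u i * c j - u j * c i) := fun l => by ring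
  rw [Finset.sum_congr rfl fun l _ => hsummand l]
  simp only [Finset.sum_add_distrib, ← Finset.sum_mul, sum_mul_apply_single, ← hz,
    Pi.add_apply, Pi.smul_apply, smul_eq_mul]
  ring

lemma grad_half_sum_mul_sq (m x : Fin n → ℝ) :
    grad (fun y => 1 / 2 * ∑ i, m i * y i ^ 2) x = fun j => m j * x j := by
  have h := (HasFDerivAt.fun_sum (u := Finset.univ) fun i _ =>
    ((hasFDerivAt_apply (𝕜 := ℝ) i x).pow 2).const_mul (m i)).const_mul (1 / 2 : ℝ)
  funext j
  rw [grad, h.fderiv]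
  simp only [smul_apply, sum_apply,
    ContinuousLinearMap.proj_apply, Pi.single_apply, smul_eq_mul, mul_ite, mul_one, mul_zero,
    Finset.sum_ite_eq', Finset.mem_univ, ↓reduceIte]
  ring

end

section Hinge

variable {I₁ I₂ I₃ Is : ℝ}

variable (I₁ I₂ I₃) in
noncomputable def hingeJLastCol : (Fin 5 → ℝ) →L[ℝ] (Fin 5 → ℝ) :=
  LinearMap.toContinuousLinearMap <| Matrix.toLin' !![0, 1, 0, -1, 0; -1, 0, 1, 0, 0;
    0, 0, 0, (I₂ - I₃) / I₁, 0; 0, 0, -((I₁ - I₃) / I₂), 0, 0; 0, 0, 0, 0, 0]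

lemma hingeJ_eq_wedge :
    hingeJ I₁ I₂ I₃ = wedge (hingeJLastCol I₁ I₂ I₃) fun _ => Pi.single 4 1 := by
  funext x
  ext i j
  fin_cases i <;> fin_cases j <;>
    simp [hingeJ, wedge, hingeJLastCol, Matrix.mulVec, dotProduct, Fin.sum_univ_five] <;> ring

lemma hingeJLastCol_apply_single_four : hingeJLastCol I₁ I₂ I₃ (Pi.single 4 1) = 0 := by
  ext i
  fin_cases i <;> simp [hingeJLastCol]

theorem jacobiIdentity_hingeJ : JacobiIdentity (hingeJ I₁ I₂ I₃) := by
  rw [hingeJ_eq_wedge]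
  refine jacobiIdentity_wedge_const _ (ContinuousLinearMap.differentiable _) fun x => ?_
  simp [ContinuousLinearMap.fderiv, hingeJLastCol_apply_single_four]

lemma grad_hingeE (x : Fin 5 → ℝ) :
    grad (hingeE I₁ I₂ I₃ Is) x = fun j => ![Is, Is, I₁, I₂, I₃ + Is] j * x j := by
  have hE : hingeE I₁ I₂ I₃ Is = fun y => 1 / 2 * ∑ i, ![Is, Is, I₁, I₂, I₃ + Is] i * y i ^ 2 := by
    funext y
    simp [hingeE, Fin.sum_univ_five]
    ring
  rw [hE, grad_half_sum_mul_sq]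

lemma hingeJ_mulVec_grad_hingeE (h₁ : I₁ ≠ 0) (h₂ : I₂ ≠ 0) (h₃ : Is + I₃ ≠ 0)
    (x : Fin 5 → ℝ) :
    (hingeJ I₁ I₂ I₃ x).mulVec (grad (hingeE I₁ I₂ I₃ Is) x) = (I₃ + Is) • hinge I₁ I₂ I₃ Is x := by
  rw [grad_hingeE]
  funext i
  fin_cases i <;> simp [Matrix.mulVec, dotProduct, Fin.sum_univ_five, hingeJ, hinge] <;>
    field_simp <;> ring

end Hinge

/-- The skew-symmetric matrix field `J` above satisfies the Jacobi identity
on all of ℝ⁵, and the hinge system is Hamiltonian with Hamiltonian `E` up to the constant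
factor `I₃ + Is`: `J(x)·∇E(x) = (I₃+Is)·v(x)` for every `x`. -/
theorem hinge_poisson_structure
    (I₁ I₂ I₃ Is : ℝ) (hI₁ : 0 < I₁) (hI₂ : 0 < I₂) (hI₃ : 0 < I₃) (hIs : 0 < Is) :
    JacobiIdentity (hingeJ I₁ I₂ I₃) ∧
    (∀ x : Fin 5 → ℝ,
      (hingeJ I₁ I₂ I₃ x).mulVec (grad (hingeE I₁ I₂ I₃ Is) x)
        = (I₃ + Is) • hinge I₁ I₂ I₃ Is x) :=
  ⟨jacobiIdentity_hingeJ, hingeJ_mulVec_grad_hingeE hI₁.ne' hI₂.ne' (by positivity)⟩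
end
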